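/- arXiv:2511.18472 — 4 statements merged into one kernel-verified Lean document; each statement's English description precedes it below -/
import Mathlib

section
/- Let v be smooth on ℝᵈ \ {0} and homogeneous of degree ℓ, and let A_{ij} be as above. Then ∑_j x_j² ∂²v/∂x_j²(x) = ((ℓ−d)ℓ/d)·v(x) + (1/d) ∑_{i<j} (A_{ij}² v)(x) for all x ≠ 0. -/
/-- The partial derivative `∂f/∂x_j` at `x`. -/
noncomputable def pderiv' {d : ℕ} (f : (Fin d → ℝ) → ℝ) (j : Fin d) (x : Fin d → ℝ) : ℝ :=
  fderiv ℝ f x (Pi.single j 1)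

/-- The first-order differential operator `A_{ij} f = x_i ∂f/∂x_i − x_j ∂f/∂x_j`. -/
noncomputable def Aop {d : ℕ} (i j : Fin d) (f : (Fin d → ℝ) → ℝ) : (Fin d → ℝ) → ℝ :=
  fun x => x i * pderiv' f i x - x j * pderiv' f j x

/-- For a symmetric function `g`, twice the sum over pairs `i < j` equals the
full double sum minus the diagonal. -/
lemma sym_sum_Ioi {d : ℕ} (g : Fin d → Fin d → ℝ) (hg : ∀ i j, g i j = g j i) :
    2 * ∑ i : Fin d, ∑ j ∈ Finset.Ioi i, g i j
      = (∑ i : Fin d, ∑ j : Fin d, g i j) - ∑ i : Fin d, g i i := by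
  have hswap : ∑ i : Fin d, ∑ j ∈ Finset.Ioi i, g i j
      = ∑ i : Fin d, ∑ j ∈ Finset.Iio i, g i j := by
    rw [Finset.sum_comm' (s' := fun j => Finset.Iio j) (t' := Finset.univ)
      (by intro i j; simp [Finset.mem_Ioi, Finset.mem_Iio])]
    exact Finset.sum_congr rfl fun i _ => Finset.sum_congr rfl fun j _ => hg j i
  have hunion : ∀ i : Fin d, ∑ j ∈ Finset.Ioi i, g i j + ∑ j ∈ Finset.Iio i, g i j
      = (∑ j : Fin d, g i j) - g i i := by
    intro i
    have hdisj : Disjoint (Finset.Ioi i) (Finset.Iio i) := by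
      simp only [Finset.disjoint_left, Finset.mem_Ioi, Finset.mem_Iio]
      intro a h1 h2; exact absurd (h1.trans h2) (lt_irrefl i)
    have hun : Finset.Ioi i ∪ Finset.Iio i = Finset.univ.erase i := by
      ext j
      simp only [Finset.mem_union, Finset.mem_Ioi, Finset.mem_Iio, Finset.mem_erase,
        Finset.mem_univ, and_true]
      rw [ne_iff_lt_or_gt]
      constructor
      · rintro (h | h); exacts [Or.inr h, Or.inl h]
      · rintro (h | h); exacts [Or.inr h, Or.inl h]
    rw [← Finset.sum_union hdisj, hun, eq_sub_iff_add_eq,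
      Finset.sum_erase_add _ _ (Finset.mem_univ i)]
  calc 2 * ∑ i : Fin d, ∑ j ∈ Finset.Ioi i, g i j
      = ∑ i : Fin d, (∑ j ∈ Finset.Ioi i, g i j + ∑ j ∈ Finset.Iio i, g i j) := by
        rw [Finset.sum_add_distrib, ← hswap]; ring
    _ = ∑ i : Fin d, ((∑ j : Fin d, g i j) - g i i) := Finset.sum_congr rfl fun i _ => hunion i
    _ = _ := by rw [Finset.sum_sub_distrib]

/-- For `v` smooth on `ℝᵈ∖{0}` homogeneous of degree `ℓ`,
`∑_j x_j² ∂²v/∂x_j² = ((ℓ−d)ℓ/d) v + (1/d) ∑_{i<j} A_{ij}² v`. -/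
theorem sum_sq_second_deriv (d : ℕ) (hd : 2 ≤ d) (ℓ : ℝ) (v : (Fin d → ℝ) → ℝ)
    (hv : ContDiffOn ℝ (⊤ : ℕ∞) v {x | x ≠ 0})
    (hom : ∀ r : ℝ, 0 < r → ∀ x : Fin d → ℝ, x ≠ 0 → v (r • x) = r ^ ℓ * v x)
    (x : Fin d → ℝ) (hx : x ≠ 0) :
    ∑ j : Fin d, (x j) ^ 2 * pderiv' (fun y => pderiv' v j y) j x
      = ((ℓ - (d : ℝ)) * ℓ / (d : ℝ)) * v x
        + (1 / (d : ℝ)) * ∑ i : Fin d, ∑ j ∈ Finset.Ioi i, Aop i j (Aop i j v) x := by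
  classical
  have hdpos : (0:ℝ) < (d : ℝ) := by
    have : 0 < d := lt_of_lt_of_le (by norm_num) hd
    exact_mod_cast this
  have hUopen : IsOpen {y : Fin d → ℝ | y ≠ 0} := isOpen_compl_singleton
  have hmem : {y : Fin d → ℝ | y ≠ 0} ∈ nhds x := hUopen.mem_nhds hx
  have hdiff : ∀ y : Fin d → ℝ, y ≠ 0 → DifferentiableAt ℝ v y := fun y hy =>
    (hv.contDiffAt (hUopen.mem_nhds hy)).differentiableAt (by simp)
  -- Euler's identity
  have euler : ∀ y : Fin d → ℝ, y ≠ 0 → fderiv ℝ v y y = ℓ * v y := by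
    intro y hy
    have hs : HasDerivAt (fun r : ℝ => r • y) y 1 := by
      simpa using (hasDerivAt_id (1:ℝ)).smul_const y
    have h1 : HasDerivAt (fun r : ℝ => v (r • y)) (fderiv ℝ v y y) 1 := by
      have hF : HasFDerivAt v (fderiv ℝ v y) ((1:ℝ) • y) := by
        rw [one_smul]; exact (hdiff y hy).hasFDerivAt
      exact hF.comp_hasDerivAt 1 hs
    have heq : (fun r : ℝ => r ^ ℓ * v y) =ᶠ[nhds (1:ℝ)] (fun r : ℝ => v (r • y)) := by
      filter_upwards [eventually_gt_nhds (show (0:ℝ) < 1 by norm_num)] with r hr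
      exact (hom r hr y hy).symm
    have h2 : HasDerivAt (fun r : ℝ => r ^ ℓ * v y) (ℓ * v y) 1 := by
      have := (Real.hasDerivAt_rpow_const (x := (1:ℝ)) (p := ℓ)
        (Or.inl one_ne_zero)).mul_const (v y)
      simpa using this
    exact (h1.congr_of_eventuallyEq heq).unique h2
  -- the second derivative at x
  have hC2 : ContDiffAt ℝ (⊤ : ℕ∞) v x := hv.contDiffAt hmem
  have hdf : DifferentiableAt ℝ (fderiv ℝ v) x :=
    (hC2.fderiv_right (m := 1) (WithTop.coe_le_coe.mpr le_top)).differentiableAt one_ne_zero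
  set B := fderiv ℝ (fderiv ℝ v) x with hBdef
  have hB : HasFDerivAt (fderiv ℝ v) B x := hdf.hasFDerivAt
  have hsymm : ∀ w z, B w z = B z w := by
    intro w z
    have hev : ∀ᶠ y in nhds x, HasFDerivAt v (fderiv ℝ v y) y := by
      filter_upwards [hmem] with y hy using (hdiff y hy).hasFDerivAt
    exact second_derivative_symmetric_of_eventually hev hB w z
  -- differentiated Euler identity
  have euler2 : ∀ w, B w x = (ℓ - 1) * fderiv ℝ v x w := by
    have h1 : HasFDerivAt (fun y => fderiv ℝ v y y)
        ((fderiv ℝ v x).comp (ContinuousLinearMap.id ℝ _) + B.flip x) x :=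
      hB.clm_apply (hasFDerivAt_id x)
    have h2 : HasFDerivAt (fun y : Fin d → ℝ => ℓ * v y) (ℓ • fderiv ℝ v x) x :=
      (hdiff x hx).hasFDerivAt.const_mul ℓ
    have heq : (fun y : Fin d → ℝ => ℓ * v y) =ᶠ[nhds x] (fun y => fderiv ℝ v y y) := by
      filter_upwards [hmem] with y hy using (euler y hy).symm
    have hEq := (h1.congr_of_eventuallyEq heq).unique h2
    intro w
    have hw := congrFun (congrArg (fun (T : (Fin d → ℝ) →L[ℝ] ℝ) => (T : (Fin d → ℝ) → ℝ)) hEq) w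
    simp only [ContinuousLinearMap.add_apply, ContinuousLinearMap.coe_comp',
      Function.comp_apply, ContinuousLinearMap.coe_id', id_eq,
      ContinuousLinearMap.flip_apply, ContinuousLinearMap.smul_apply, smul_eq_mul] at hw
    linarith
  -- derivative of y ↦ (fderiv v y) u
  have hp : ∀ (u : Fin d → ℝ), HasFDerivAt (fun y => fderiv ℝ v y u) (B.flip u) x := by
    intro u
    have := hB.clm_apply (hasFDerivAt_const u x)
    simpa using this
  -- abbreviations
  set e : Fin d → (Fin d → ℝ) := fun i => Pi.single i (1:ℝ) with he
  -- LHS terms are B (e j) (e j) scaled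
  have hLHS : ∀ j, pderiv' (fun y => pderiv' v j y) j x = B (e j) (e j) := by
    intro j
    show fderiv ℝ (fun y => fderiv ℝ v y (Pi.single j 1)) x (Pi.single j 1) = _
    rw [(hp (Pi.single j 1)).fderiv]
    simp [he, ContinuousLinearMap.flip_apply]
  -- decomposition of x in the standard basis
  have hxsum : x = ∑ i : Fin d, x i • e i := by
    ext k
    simp [he, Finset.sum_apply, Pi.single_apply]
  have hfx : fderiv ℝ v x x = ∑ i : Fin d, x i * fderiv ℝ v x (e i) := by
    calc fderiv ℝ v x x = fderiv ℝ v x (∑ i : Fin d, x i • e i) := by rw [← hxsum]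
      _ = _ := by
        rw [map_sum]
        exact Finset.sum_congr rfl fun i _ => by rw [map_smul]; simp
  have hBx : ∀ w, ∑ j : Fin d, x j * B w (e j) = (ℓ - 1) * fderiv ℝ v x w := by
    intro w
    have : B w x = ∑ j : Fin d, x j * B w (e j) := by
      calc B w x = B w (∑ j : Fin d, x j • e j) := by rw [← hxsum]
        _ = _ := by
          rw [map_sum]
          exact Finset.sum_congr rfl fun j _ => by rw [map_smul]; simp
    rw [← this, euler2]
  -- key facts
  have F1 : ∑ i : Fin d, x i * fderiv ℝ v x (e i) = ℓ * v x := by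
    rw [← hfx, euler x hx]
  have F2 : ∑ i : Fin d, ∑ j : Fin d, x i * x j * B (e i) (e j) = (ℓ - 1) * (ℓ * v x) := by
    have : ∀ i : Fin d, ∑ j : Fin d, x i * x j * B (e i) (e j)
        = x i * ((ℓ - 1) * fderiv ℝ v x (e i)) := by
      intro i
      rw [← hBx (e i), Finset.mul_sum]
      exact Finset.sum_congr rfl fun j _ => by ring
    rw [Finset.sum_congr rfl fun i _ => this i, ← F1, Finset.mul_sum]
    exact Finset.sum_congr rfl fun i _ => by ring
  -- second application of Aop
  have hA2 : ∀ i j : Fin d, i ≠ j → Aop i j (Aop i j v) x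
      = x i * fderiv ℝ v x (e i) + x j * fderiv ℝ v x (e j)
        + (x i)^2 * B (e i) (e i) + (x j)^2 * B (e j) (e j)
        - 2 * (x i * x j * B (e i) (e j)) := by
    intro i j hij
    have h1 : HasFDerivAt (fun y : Fin d → ℝ => y i * fderiv ℝ v y (Pi.single i 1))
        (x i • (B.flip (Pi.single i 1))
          + (fderiv ℝ v x (Pi.single i 1)) • (ContinuousLinearMap.proj i)) x :=
      (hasFDerivAt_apply i x).mul (hp (Pi.single i 1))
    have h2 : HasFDerivAt (fun y : Fin d → ℝ => y j * fderiv ℝ v y (Pi.single j 1))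
        (x j • (B.flip (Pi.single j 1))
          + (fderiv ℝ v x (Pi.single j 1)) • (ContinuousLinearMap.proj j)) x :=
      (hasFDerivAt_apply j x).mul (hp (Pi.single j 1))
    have hAd : HasFDerivAt (Aop i j v)
        ((x i • (B.flip (Pi.single i 1))
          + (fderiv ℝ v x (Pi.single i 1)) • (ContinuousLinearMap.proj i))
         - (x j • (B.flip (Pi.single j 1))
          + (fderiv ℝ v x (Pi.single j 1)) • (ContinuousLinearMap.proj j))) x := h1.sub h2
    have hfd := hAd.fderiv
    show x i * pderiv' (Aop i j v) i x - x j * pderiv' (Aop i j v) j x = _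
    unfold pderiv'
    rw [hfd]
    simp only [ContinuousLinearMap.sub_apply, ContinuousLinearMap.add_apply,
      ContinuousLinearMap.smul_apply, ContinuousLinearMap.flip_apply,
      ContinuousLinearMap.proj_apply, smul_eq_mul]
    rw [Pi.single_eq_same, Pi.single_eq_same, Pi.single_eq_of_ne hij,
      Pi.single_eq_of_ne hij.symm, hsymm (Pi.single j 1) (Pi.single i 1)]
    simp only [he]
    ring
  -- assemble
  set P : Fin d → ℝ := fun i => x i * fderiv ℝ v x (e i) with hP
  set Q : Fin d → ℝ := fun i => (x i)^2 * B (e i) (e i) with hQ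
  set g : Fin d → Fin d → ℝ := fun i j => P i + P j + Q i + Q j
    - 2 * (x i * x j * B (e i) (e j)) with hg
  have hgsym : ∀ i j, g i j = g j i := by
    intro i j; simp only [hg]; rw [hsymm (e i) (e j)]; ring
  have hT : ∑ i : Fin d, ∑ j ∈ Finset.Ioi i, Aop i j (Aop i j v) x
      = ∑ i : Fin d, ∑ j ∈ Finset.Ioi i, g i j := by
    refine Finset.sum_congr rfl fun i _ => Finset.sum_congr rfl fun j hj => ?_
    exact hA2 i j (ne_of_lt (Finset.mem_Ioi.mp hj))
  have hdiag : ∑ i : Fin d, g i i = 2 * (ℓ * v x) := by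
    have : ∀ i : Fin d, g i i = 2 * P i := by
      intro i; simp only [hg, hQ]; ring
    rw [Finset.sum_congr rfl fun i _ => this i, ← Finset.mul_sum, hP, F1]
  have hfull : ∑ i : Fin d, ∑ j : Fin d, g i j
      = 2 * (d : ℝ) * (ℓ * v x) + 2 * (d : ℝ) * (∑ i : Fin d, Q i)
        - 2 * ((ℓ - 1) * (ℓ * v x)) := by
    have expand : ∀ i : Fin d, ∑ j : Fin d, g i j
        = (d : ℝ) * P i + (∑ j : Fin d, P j) + (d : ℝ) * Q i + (∑ j : Fin d, Q j)
          - 2 * ∑ j : Fin d, x i * x j * B (e i) (e j) := by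
      intro i
      simp only [hg]
      rw [Finset.sum_sub_distrib, Finset.sum_add_distrib, Finset.sum_add_distrib,
        Finset.sum_add_distrib, Finset.sum_const, Finset.sum_const, ← Finset.mul_sum]
      simp [Fintype.card_fin, nsmul_eq_mul]
    have h2R : ∑ i : Fin d, 2 * ∑ j : Fin d, x i * x j * B (e i) (e j)
        = 2 * ((ℓ - 1) * (ℓ * v x)) := by
      rw [← Finset.mul_sum, F2]
    rw [Finset.sum_congr rfl fun i _ => expand i, Finset.sum_sub_distrib,
      Finset.sum_add_distrib, Finset.sum_add_distrib, Finset.sum_add_distrib, h2R]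
    simp only [← Finset.mul_sum, Finset.sum_const, Finset.card_univ, Fintype.card_fin,
      nsmul_eq_mul, F1]
    ring
  have hTval : ∑ i : Fin d, ∑ j ∈ Finset.Ioi i, g i j
      = (d : ℝ) * (∑ i : Fin d, Q i) + ((d : ℝ) * ℓ - ℓ^2) * v x := by
    have := sym_sum_Ioi g hgsym
    rw [hfull, hdiag] at this
    linarith
  have hL : ∑ j : Fin d, (x j) ^ 2 * pderiv' (fun y => pderiv' v j y) j x
      = ∑ i : Fin d, Q i := by
    exact Finset.sum_congr rfl fun j _ => by rw [hLHS j, hQ]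
  rw [hL, hT, hTval]
  field_simp
  ring
end

section
/- Let v be smooth on ℝᵈ \ {0} and homogeneous of degree ℓ. Then 2 ∑_{i<j} x_i x_j ∂²v/∂x_i∂x_j(x) = ((d−1)/d)·ℓ²·v(x) − (1/d) ∑_{i<j} (A_{ij}² v)(x). -/
open Finset

/-- Evaluate a continuous linear map on `x` as a sum over coordinates. -/
lemma clm_apply_eq_sum {d : ℕ} (L : (Fin d → ℝ) →L[ℝ] ℝ) (x : Fin d → ℝ) :
    L x = ∑ i, x i * L (Pi.single i 1) := by
  have hx : x = ∑ i, x i • (Pi.single i 1 : Fin d → ℝ) := by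
    funext j
    simp [Pi.single_apply, Finset.sum_apply]
  conv_lhs => rw [hx]
  simp [smul_eq_mul]

/-- Euler's identity for homogeneous functions. -/
lemma euler_id {d : ℕ} {m : ℝ} {f : (Fin d → ℝ) → ℝ} {x : Fin d → ℝ} (hx : x ≠ 0)
    (hf : DifferentiableAt ℝ f x)
    (hom : ∀ r : ℝ, 0 < r → ∀ y : Fin d → ℝ, y ≠ 0 → f (r • y) = r ^ m * f y) :
    ∑ i, x i * pderiv' f i x = m * f x := by
  have hs : HasDerivAt (fun r : ℝ => r • x) x 1 := by
    simpa using (hasDerivAt_id (1 : ℝ)).smul_const x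
  have h1 : HasDerivAt (fun r : ℝ => f (r • x)) (fderiv ℝ f x x) 1 := by
    have hfx : HasFDerivAt f (fderiv ℝ f x) ((1:ℝ) • x) := by
      rw [one_smul]; exact hf.hasFDerivAt
    exact hfx.comp_hasDerivAt 1 hs
  have h3 : HasDerivAt (fun r : ℝ => r ^ m * f x) (m * f x) 1 := by
    have := (Real.hasDerivAt_rpow_const (x := (1:ℝ)) (p := m) (Or.inl one_ne_zero)).mul_const (f x)
    simpa using this
  have heq : (fun r : ℝ => r ^ m * f x) =ᶠ[nhds 1] fun r : ℝ => f (r • x) := by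
    filter_upwards [eventually_gt_nhds zero_lt_one] with r hr
    exact (hom r hr x hx).symm
  have h4 : HasDerivAt (fun r : ℝ => f (r • x)) (m * f x) 1 := h3.congr_of_eventuallyEq heq.symm
  have h5 : fderiv ℝ f x x = m * f x := h1.unique h4
  rw [← h5]
  exact (clm_apply_eq_sum (fderiv ℝ f x) x).symm

/-- Homogeneity of partial derivatives. -/
lemma pderiv_hom {d : ℕ} {m : ℝ} {f : (Fin d → ℝ) → ℝ}
    (hf : ∀ y : Fin d → ℝ, y ≠ 0 → DifferentiableAt ℝ f y)
    (hom : ∀ r : ℝ, 0 < r → ∀ y : Fin d → ℝ, y ≠ 0 → f (r • y) = r ^ m * f y)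
    (j : Fin d) (r : ℝ) (hr : 0 < r) (x : Fin d → ℝ) (hx : x ≠ 0) :
    pderiv' f j (r • x) = r ^ (m - 1) * pderiv' f j x := by
  have hrx : r • x ≠ 0 := smul_ne_zero (ne_of_gt hr) hx
  set L : (Fin d → ℝ) →L[ℝ] (Fin d → ℝ) := r • ContinuousLinearMap.id ℝ (Fin d → ℝ) with hL
  have hcomp : HasFDerivAt (fun y : Fin d → ℝ => f (r • y))
      ((fderiv ℝ f (r • x)).comp L) x := by
    have h1 : HasFDerivAt f (fderiv ℝ f (r • x)) (L x) := by
      simpa [hL] using (hf _ hrx).hasFDerivAt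
    exact h1.comp x L.hasFDerivAt
  have hR : HasFDerivAt (fun y : Fin d → ℝ => r ^ m * f y)
      (r ^ m • fderiv ℝ f x) x := ((hf x hx).hasFDerivAt).const_mul _
  have heq : (fun y : Fin d → ℝ => r ^ m * f y) =ᶠ[nhds x]
      fun y : Fin d → ℝ => f (r • y) := by
    filter_upwards [isOpen_ne.mem_nhds hx] with y hy
    exact (hom r hr y hy).symm
  have hL2 : HasFDerivAt (fun y : Fin d → ℝ => f (r • y))
      (r ^ m • fderiv ℝ f x) x := hR.congr_of_eventuallyEq heq.symm
  have huniq := hcomp.unique hL2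
  have happ := congrArg (fun (T : (Fin d → ℝ) →L[ℝ] ℝ) => T (Pi.single j 1)) huniq
  simp only [ContinuousLinearMap.coe_comp', Function.comp_apply, hL,
    ContinuousLinearMap.smul_apply, ContinuousLinearMap.id_apply,
    ContinuousLinearMap.coe_smul'] at happ
  -- happ : fderiv ℝ f (r • x) (r • Pi.single j 1) = r ^ m • fderiv ℝ f x (Pi.single j 1)
  have happ' : r * fderiv ℝ f (r • x) (Pi.single j 1)
      = r ^ m * fderiv ℝ f x (Pi.single j 1) := by
    simpa [map_smul, smul_eq_mul] using happ
  unfold pderiv'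
  have : r ^ (m - 1) = r ^ m / r := by
    rw [Real.rpow_sub hr, Real.rpow_one]
  rw [this]
  field_simp
  linarith [happ']

lemma swap_tri {d : ℕ} (f : Fin d → Fin d → ℝ) :
    ∑ i, ∑ j ∈ Ioi i, f i j = ∑ j, ∑ i ∈ Iio j, f i j := by
  rw [Finset.sum_sigma', Finset.sum_sigma']
  refine Finset.sum_nbij' (fun p => ⟨p.2, p.1⟩) (fun p => ⟨p.2, p.1⟩) ?_ ?_ ?_ ?_ ?_ <;> simp

lemma sum_split_diag {d : ℕ} (f : Fin d → Fin d → ℝ) (i : Fin d) :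
    ∑ j, f i j = f i i + (∑ j ∈ Ioi i, f i j + ∑ j ∈ Iio i, f i j) := by
  have h2 : ∑ j ∈ Ioi i, f i j + ∑ j ∈ Iio i, f i j = ∑ j ∈ ({i}ᶜ : Finset (Fin d)), f i j := by
    rw [← Finset.sum_disjUnion (Finset.disjoint_Ioi_Iio i), Finset.Ioi_disjUnion_Iio i]
  rw [h2, ← Finset.sum_compl_add_sum ({i} : Finset (Fin d)) (f i), Finset.sum_singleton, add_comm]

lemma diag_split {d : ℕ} (f : Fin d → Fin d → ℝ) :
    ∑ i, ∑ j, f i j = ∑ i, f i i + ∑ i, ∑ j ∈ Ioi i, (f i j + f j i) := by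
  have hsw : ∑ i, ∑ j ∈ Iio i, f i j = ∑ i, ∑ j ∈ Ioi i, f j i :=
    (swap_tri fun i j => f j i).symm
  simp only [sum_split_diag f, Finset.sum_add_distrib, hsw]

lemma card_Ioi_add_card_Iio {d : ℕ} (i : Fin d) :
    (Ioi i).card + (Iio i).card = d - 1 := by
  have : ((Ioi i).disjUnion (Iio i) (Finset.disjoint_Ioi_Iio i)).card
      = ({i}ᶜ : Finset (Fin d)).card := by
    rw [Finset.Ioi_disjUnion_Iio i]
  rw [Finset.card_disjUnion] at this
  rw [this, Finset.card_compl, Finset.card_singleton, Fintype.card_fin]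

lemma pair_sum {d : ℕ} (hd : 1 ≤ d) (g : Fin d → ℝ) :
    ∑ i, ∑ j ∈ Ioi i, (g i + g j) = ((d : ℝ) - 1) * ∑ i, g i := by
  have h1 : ∑ i, ∑ j ∈ Ioi i, g j = ∑ i, ∑ j ∈ Iio i, g i := swap_tri (fun i j => g j)
  simp only [Finset.sum_add_distrib, h1, Finset.sum_const, nsmul_eq_mul]
  rw [← Finset.sum_add_distrib, Finset.mul_sum]
  refine Finset.sum_congr rfl fun i _ => ?_
  have hc := card_Ioi_add_card_Iio i
  have : ((Ioi i).card : ℝ) + ((Iio i).card : ℝ) = (d : ℝ) - 1 := by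
    rw [← Nat.cast_add, hc, Nat.cast_sub hd, Nat.cast_one]
  linear_combination g i * this

lemma pderiv_coord_mul {d : ℕ} {f : (Fin d → ℝ) → ℝ} {x : Fin d → ℝ}
    (hf : DifferentiableAt ℝ f x) (i k : Fin d) :
    pderiv' (fun y => y i * f y) k x
      = (if i = k then f x else 0) + x i * pderiv' f k x := by
  have hp : DifferentiableAt ℝ (fun y : Fin d → ℝ => y i) x :=
    (ContinuousLinearMap.proj (R := ℝ) (φ := fun _ : Fin d => ℝ) i).differentiableAt
  have hpf : fderiv ℝ (fun y : Fin d → ℝ => y i) x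
      = ContinuousLinearMap.proj (R := ℝ) (φ := fun _ : Fin d => ℝ) i :=
    (ContinuousLinearMap.proj (R := ℝ) (φ := fun _ : Fin d => ℝ) i).fderiv
  unfold pderiv'
  rw [fderiv_fun_mul hp hf, hpf]
  simp only [ContinuousLinearMap.add_apply, ContinuousLinearMap.coe_smul',
    Pi.smul_apply, smul_eq_mul, ContinuousLinearMap.proj_apply, Pi.single_apply]
  by_cases h : i = k <;> simp [h] <;> ring

/-- For `v` smooth on `ℝᵈ∖{0}` homogeneous of degree `ℓ`,
`2 ∑_{i<j} x_i x_j ∂²v/∂x_i∂x_j = ((d−1)/d) ℓ² v − (1/d) ∑_{i<j} A_{ij}² v`. -/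
theorem mixed_second_deriv (d : ℕ) (hd : 2 ≤ d) (ℓ : ℝ) (v : (Fin d → ℝ) → ℝ)
    (hv : ContDiffOn ℝ (⊤ : ℕ∞) v {x | x ≠ 0})
    (hom : ∀ r : ℝ, 0 < r → ∀ x : Fin d → ℝ, x ≠ 0 → v (r • x) = r ^ ℓ * v x)
    (x : Fin d → ℝ) (hx : x ≠ 0) :
    2 * ∑ i : Fin d, ∑ j ∈ Finset.Ioi i,
        x i * x j * pderiv' (fun y => pderiv' v j y) i x
      = (((d : ℝ) - 1) / (d : ℝ)) * ℓ ^ 2 * v x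
        - (1 / (d : ℝ)) * ∑ i : Fin d, ∑ j ∈ Finset.Ioi i, Aop i j (Aop i j v) x := by
  have hd1 : 1 ≤ d := le_trans one_le_two hd
  have hdR : (0:ℝ) < d := by
    have : 0 < d := lt_of_lt_of_le two_pos hd
    exact_mod_cast this
  have hU : IsOpen {y : Fin d → ℝ | y ≠ 0} := isOpen_ne
  have hv' : ContDiffOn ℝ (⊤ : ℕ∞) v {y | y ≠ 0} := hv.of_le (by simp)
  have hvdiff : ∀ y : Fin d → ℝ, y ≠ 0 → DifferentiableAt ℝ v y := fun y hy =>
    (hv'.contDiffAt (hU.mem_nhds hy)).differentiableAt (by simp)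
  set W : Fin d → (Fin d → ℝ) → ℝ := fun j y => fderiv ℝ v y (Pi.single j 1) with hWdef
  have hFsm : ContDiffOn ℝ (⊤ : ℕ∞) (fderiv ℝ v) {y | y ≠ 0} :=
    hv'.fderiv_of_isOpen hU (by simp)
  have hWsm : ∀ j, ContDiffOn ℝ (⊤ : ℕ∞) (W j) {y | y ≠ 0} := fun j =>
    hFsm.clm_apply contDiffOn_const
  have hWdiff : ∀ j, ∀ y : Fin d → ℝ, y ≠ 0 → DifferentiableAt ℝ (W j) y := fun j y hy =>
    ((hWsm j).contDiffAt (hU.mem_nhds hy)).differentiableAt (by simp)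
  have hWhom : ∀ j, ∀ r : ℝ, 0 < r → ∀ y : Fin d → ℝ, y ≠ 0 →
      W j (r • y) = r ^ (ℓ - 1) * W j y := fun j r hr y hy =>
    pderiv_hom hvdiff hom j r hr y hy
  have hE1 : ∑ i, x i * W i x = ℓ * v x := euler_id hx (hvdiff x hx) hom
  set M : Fin d → Fin d → ℝ := fun i j => pderiv' (W j) i x with hM
  have hE2 : ∀ j, ∑ i, x i * M i j = (ℓ - 1) * W j x := fun j =>
    euler_id hx (hWdiff j x hx) (hWhom j)
  -- symmetry of second derivatives
  have hFd : DifferentiableAt ℝ (fderiv ℝ v) x :=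
    (hFsm.contDiffAt (hU.mem_nhds hx)).differentiableAt (by simp)
  have hM2 : ∀ a b : Fin d, M a b
      = fderiv ℝ (fderiv ℝ v) x (Pi.single a 1) (Pi.single b 1) := by
    intro a b
    show fderiv ℝ (fun y => fderiv ℝ v y (Pi.single b 1)) x (Pi.single a 1) = _
    rw [fderiv_clm_apply hFd (differentiableAt_const _)]
    simp
  have hsnd : IsSymmSndFDerivAt ℝ v x :=
    (hv'.contDiffAt (hU.mem_nhds hx)).isSymmSndFDerivAt (by rw [minSmoothness_of_isRCLikeNormedField]; exact WithTop.coe_le_coe.mpr (le_top : (2 : ℕ∞) ≤ ⊤))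
  have hsym : ∀ i j, M i j = M j i := by
    intro i j
    rw [hM2 i j, hM2 j i]
    exact hsnd _ _
  -- double Euler
  have hT : ∑ i, ∑ j, x i * x j * M i j = ℓ * (ℓ - 1) * v x := by
    rw [Finset.sum_comm]
    have : ∀ j : Fin d, ∑ i, x i * x j * M i j = x j * ((ℓ - 1) * W j x) := by
      intro j
      rw [← hE2 j, Finset.mul_sum]
      exact Finset.sum_congr rfl fun i _ => by ring
    rw [Finset.sum_congr rfl fun j _ => this j]
    have : ∑ j, x j * ((ℓ - 1) * W j x) = (ℓ - 1) * ∑ j, x j * W j x := by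
      rw [Finset.mul_sum]; exact Finset.sum_congr rfl fun j _ => by ring
    rw [this, hE1]; ring
  -- expansion of Aop squared
  have hA : ∀ i j : Fin d, i ≠ j → Aop i j (Aop i j v) x
      = (x i * W i x + x j * W j x) + (x i ^ 2 * M i i + x j ^ 2 * M j j)
        - 2 * (x i * x j * M i j) := by
    intro i j hij
    have hk : ∀ k, pderiv' (Aop i j v) k x
        = ((if i = k then W i x else 0) + x i * M k i)
          - ((if j = k then W j x else 0) + x j * M k j) := by
      intro k
      have h1 : DifferentiableAt ℝ (fun y => y i * W i y) x :=
        ((ContinuousLinearMap.proj (R := ℝ) (φ := fun _ : Fin d => ℝ) i).differentiableAt).mul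
          (hWdiff i x hx)
      have h2 : DifferentiableAt ℝ (fun y => y j * W j y) x :=
        ((ContinuousLinearMap.proj (R := ℝ) (φ := fun _ : Fin d => ℝ) j).differentiableAt).mul
          (hWdiff j x hx)
      have hAv : Aop i j v = fun y => y i * W i y - y j * W j y := rfl
      have : pderiv' (Aop i j v) k x
          = pderiv' (fun y => y i * W i y) k x - pderiv' (fun y => y j * W j y) k x := by
        rw [hAv]
        unfold pderiv'
        rw [fderiv_fun_sub h1 h2]
        simp
      rw [this, pderiv_coord_mul (hWdiff i x hx) i k, pderiv_coord_mul (hWdiff j x hx) j k]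
    have hAx : Aop i j (Aop i j v) x
        = x i * pderiv' (Aop i j v) i x - x j * pderiv' (Aop i j v) j x := rfl
    rw [hAx, hk i, hk j]
    simp only [if_pos rfl, if_neg hij, if_neg (Ne.symm hij), if_true]
    rw [hsym j i]
    ring
  set S := ∑ i, ∑ j ∈ Finset.Ioi i, x i * x j * M i j with hS
  set D := ∑ i, x i ^ 2 * M i i with hD
  have hsplit : D + 2 * S = ℓ * (ℓ - 1) * v x := by
    rw [← hT, diag_split (fun i j => x i * x j * M i j)]
    have h1 : ∑ i, x i * x i * M i i = D := by
      rw [hD]; exact Finset.sum_congr rfl fun i _ => by ring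
    have h2 : ∑ i, ∑ j ∈ Finset.Ioi i, (x i * x j * M i j + x j * x i * M j i)
        = 2 * S := by
      rw [hS, Finset.mul_sum]
      refine Finset.sum_congr rfl fun i _ => ?_
      rw [Finset.mul_sum]
      refine Finset.sum_congr rfl fun j _ => ?_
      rw [hsym j i]; ring
    rw [h1, h2]
  have hAsum : ∑ i, ∑ j ∈ Finset.Ioi i, Aop i j (Aop i j v) x
      = ((d : ℝ) - 1) * (ℓ * v x) + ((d : ℝ) - 1) * D - 2 * S := by
    have hcong : ∑ i, ∑ j ∈ Finset.Ioi i, Aop i j (Aop i j v) x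
        = ∑ i, ∑ j ∈ Finset.Ioi i,
            (((x i * W i x + x j * W j x) + (x i ^ 2 * M i i + x j ^ 2 * M j j))
              - 2 * (x i * x j * M i j)) := by
      refine Finset.sum_congr rfl fun i _ => Finset.sum_congr rfl fun j hj => ?_
      exact hA i j (ne_of_lt (Finset.mem_Ioi.mp hj))
    rw [hcong]
    simp only [Finset.sum_sub_distrib, Finset.sum_add_distrib]
    have p1 := pair_sum hd1 (fun i => x i * W i x)
    have p2 := pair_sum hd1 (fun i => x i ^ 2 * M i i)
    simp only [Finset.sum_add_distrib] at p1 p2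
    have hC : ∑ i, ∑ j ∈ Finset.Ioi i, 2 * (x i * x j * M i j) = 2 * S := by
      rw [hS, Finset.mul_sum]
      exact Finset.sum_congr rfl fun i _ => by rw [Finset.mul_sum]
    rw [hE1] at p1
    rw [← hD] at p2
    linarith [p1, p2, hC]
  have hgoal : ∑ i : Fin d, ∑ j ∈ Finset.Ioi i,
      x i * x j * pderiv' (fun y => pderiv' v j y) i x = S := rfl
  rw [hgoal, hAsum]
  field_simp
  nlinarith [hsplit, sq_nonneg ((d:ℝ))]
end

section
/- Let η₁, η₂ be independent random variables uniformly distributed on (−π, π), let u₁₂, u₂₁ : ℝ → ℝ be C¹ and 2π-periodic, and let δ be a real constant. Set ξ₂₁ = u₂₁'(η₂₁:=η₂) and ξ₁₂ = u₁₂'(η₁ + δ·u₂₁(η₂)). Then for all real s₁, s₂, E[exp(i s₁ ξ₁₂ + i s₂ ξ₂₁)] = ((1/2π)∫_{−π}^{π} exp(i s₁ u₁₂'(θ)) dθ) · ((1/2π)∫_{−π}^{π} exp(i s₂ u₂₁'(θ)) dθ); in particular ξ₁₂ and ξ₂₁ are independent. -/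
open Real MeasureTheory ProbabilityTheory

open scoped ENNReal

lemma lintegral_periodic_Ioc {T : ℝ} (hT : 0 < T) {f : ℝ → ℝ≥0∞}
    (hf : Function.Periodic f T) (s t : ℝ) :
    ∫⁻ x in Set.Ioc s (s + T), f x = ∫⁻ x in Set.Ioc t (t + T), f x := by
  haveI : Fact (0 < T) := ⟨hT⟩
  have h1 : ∀ r : ℝ, ∫⁻ x in Set.Ioc r (r + T), f x = ∫⁻ b : AddCircle T, hf.lift b := by
    intro r
    rw [← AddCircle.lintegral_preimage T r]
    exact setLIntegral_congr_fun measurableSet_Ioc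
      (fun x _ => (hf.lift_coe x).symm)
  rw [h1, h1]

lemma mu_shift {S : Set ℝ} (hS : MeasurableSet S)
    (hper : ∀ x, x + 2 * π ∈ S ↔ x ∈ S) (c : ℝ) :
    volume.restrict (Set.Ioo (-π) π) ((fun x => x + c) ⁻¹' S) =
      volume.restrict (Set.Ioo (-π) π) S := by
  have hre : volume.restrict (Set.Ioo (-π) π) = volume.restrict (Set.Ioc (-π) π) :=
    Measure.restrict_congr_set Ioo_ae_eq_Ioc
  have hSc : MeasurableSet ((fun x => x + c) ⁻¹' S) := (measurable_add_const c) hS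
  have hind : Function.Periodic (S.indicator (fun _ => (1 : ℝ≥0∞))) (2 * π) := by
    intro x
    by_cases h : x ∈ S
    · rw [Set.indicator_of_mem ((hper x).2 h), Set.indicator_of_mem h]
    · rw [Set.indicator_of_notMem (fun hh => h ((hper x).1 hh)), Set.indicator_of_notMem h]
  rw [hre, Measure.restrict_apply hSc, Measure.restrict_apply hS]
  have e1 : volume ((fun x => x + c) ⁻¹' S ∩ Set.Ioc (-π) π) =
      ∫⁻ x in Set.Ioc (-π) π, S.indicator (fun _ => (1:ℝ≥0∞)) (x + c) := by
    rw [← lintegral_indicator measurableSet_Ioc _]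
    rw [← lintegral_indicator_one (hSc.inter measurableSet_Ioc)]
    congr 1
    ext x
    by_cases hx : x ∈ Set.Ioc (-π) π
    · by_cases hx2 : x + c ∈ S <;>
        simp [Set.indicator, hx, hx2, Set.mem_preimage]
    · simp [Set.indicator, hx, Set.mem_preimage]
  have e2 : ∫⁻ x in Set.Ioc (-π) π, S.indicator (fun _ => (1:ℝ≥0∞)) (x + c) =
      ∫⁻ x in Set.Ioc (-π + c) (π + c), S.indicator (fun _ => (1:ℝ≥0∞)) x := by
    have := (measurePreserving_add_right volume c).setLIntegral_comp_emb
      (MeasurableEquiv.addRight c).measurableEmbedding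
      (S.indicator (fun _ => (1:ℝ≥0∞))) (Set.Ioc (-π) π)
    rw [this]
    rw [Set.image_add_const_Ioc]
  have e3 : ∫⁻ x in Set.Ioc (-π + c) (π + c), S.indicator (fun _ => (1:ℝ≥0∞)) x =
      ∫⁻ x in Set.Ioc (-π) π, S.indicator (fun _ => (1:ℝ≥0∞)) x := by
    have h2π : (0:ℝ) < 2 * π := by positivity
    have := lintegral_periodic_Ioc h2π hind (-π + c) (-π)
    have ha : -π + c + 2 * π = π + c := by ring
    have hb : -π + 2 * π = π := by ring
    rwa [ha, hb] at this
  rw [e1, e2, e3, ← lintegral_indicator_one (hS.inter measurableSet_Ioc),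
    ← lintegral_indicator measurableSet_Ioc _]
  congr 1
  ext x
  by_cases hx : x ∈ Set.Ioc (-π) π
  · by_cases hx2 : x ∈ S <;> simp [Set.indicator, hx, hx2]
  · simp [Set.indicator, hx]

/-- Independence of the velocity-gradient variables in the `d = 2` renewing-flow model:
the joint characteristic function of `ξ₁₂ = u₁₂'(η₁ + δ u₂₁(η₂))` and `ξ₂₁ = u₂₁'(η₂)`
factorises, and `ξ₁₂`, `ξ₂₁` are independent. -/
theorem xi_indep {Ω : Type*} [MeasureSpace Ω] [IsProbabilityMeasure (ℙ : Measure Ω)]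
    (η₁ η₂ : Ω → ℝ) (hm₁ : Measurable η₁) (hm₂ : Measurable η₂)
    (hindep : IndepFun η₁ η₂)
    (hunif₁ : Measure.map η₁ ℙ = (ENNReal.ofReal (2 * π))⁻¹ • volume.restrict (Set.Ioo (-π) π))
    (hunif₂ : Measure.map η₂ ℙ = (ENNReal.ofReal (2 * π))⁻¹ • volume.restrict (Set.Ioo (-π) π))
    (u₁₂ u₂₁ : ℝ → ℝ) (h₁ : ContDiff ℝ 1 u₁₂) (h₂ : ContDiff ℝ 1 u₂₁)
    (hp₁ : ∀ θ : ℝ, u₁₂ (θ + 2 * π) = u₁₂ θ) (hp₂ : ∀ θ : ℝ, u₂₁ (θ + 2 * π) = u₂₁ θ)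
    (δ : ℝ) (ξ₁₂ ξ₂₁ : Ω → ℝ)
    (hξ₁₂ : ∀ ω, ξ₁₂ ω = deriv u₁₂ (η₁ ω + δ * u₂₁ (η₂ ω)))
    (hξ₂₁ : ∀ ω, ξ₂₁ ω = deriv u₂₁ (η₂ ω)) :
    (∀ s₁ s₂ : ℝ,
      ∫ ω, Complex.exp (Complex.I * ((s₁ * ξ₁₂ ω + s₂ * ξ₂₁ ω : ℝ) : ℂ)) ∂ℙ =
        ((1 / (2 * π) : ℂ) * ∫ θ in (-π)..π, Complex.exp (Complex.I * ((s₁ * deriv u₁₂ θ : ℝ) : ℂ))) *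
        ((1 / (2 * π) : ℂ) * ∫ θ in (-π)..π, Complex.exp (Complex.I * ((s₂ * deriv u₂₁ θ : ℝ) : ℂ)))) ∧
    IndepFun ξ₁₂ ξ₂₁ := by
  have hπ : (0:ℝ) < 2 * π := by positivity
  set μ : Measure ℝ := (ENNReal.ofReal (2 * π))⁻¹ • volume.restrict (Set.Ioo (-π) π) with hμ
  have h2π0 : ENNReal.ofReal (2 * π) ≠ 0 := by
    simp [ENNReal.ofReal_eq_zero, not_le, hπ, pi_pos]
  have hμprob : IsProbabilityMeasure μ := ⟨by
    rw [hμ, Measure.smul_apply, Measure.restrict_apply MeasurableSet.univ, Set.univ_inter,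
      Real.volume_Ioo, show π - -π = 2 * π by ring, smul_eq_mul,
      ENNReal.inv_mul_cancel h2π0 ENNReal.ofReal_ne_top]⟩
  have hd₁c : Continuous (deriv u₁₂) := h₁.continuous_deriv le_rfl
  have hd₂c : Continuous (deriv u₂₁) := h₂.continuous_deriv le_rfl
  have hdp₁ : ∀ x : ℝ, deriv u₁₂ (x + 2 * π) = deriv u₁₂ x := by
    intro x
    have he : u₁₂ = fun y => u₁₂ (y + 2 * π) := funext fun y => (hp₁ y).symm
    conv_rhs => rw [he]
    rw [deriv_comp_add_const]
  have hdp₂ : ∀ x : ℝ, deriv u₂₁ (x + 2 * π) = deriv u₂₁ x := by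
    intro x
    have he : u₂₁ = fun y => u₂₁ (y + 2 * π) := funext fun y => (hp₂ y).symm
    conv_rhs => rw [he]
    rw [deriv_comp_add_const]
  set ν₁ : Measure ℝ := Measure.map (deriv u₁₂) μ with hν₁
  set ν₂ : Measure ℝ := Measure.map (deriv u₂₁) μ with hν₂
  have hν₁prob : IsProbabilityMeasure ν₁ := Measure.isProbabilityMeasure_map hd₁c.measurable.aemeasurable
  have hν₂prob : IsProbabilityMeasure ν₂ := Measure.isProbabilityMeasure_map hd₂c.measurable.aemeasurable
  have hpairη : Measure.map (fun ω => (η₁ ω, η₂ ω)) ℙ = μ.prod μ := by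
    rw [(indepFun_iff_map_prod_eq_prod_map_map hm₁.aemeasurable hm₂.aemeasurable).mp hindep,
      hunif₁, hunif₂]
  set F : ℝ × ℝ → ℝ × ℝ := fun p => (deriv u₁₂ (p.1 + δ * u₂₁ p.2), deriv u₂₁ p.2) with hF
  have hFc : Continuous F :=
    (hd₁c.comp (continuous_fst.add (continuous_const.mul
      (h₂.continuous.comp continuous_snd)))).prodMk (hd₂c.comp continuous_snd)
  have hξpair : (fun ω => (ξ₁₂ ω, ξ₂₁ ω)) = F ∘ (fun ω => (η₁ ω, η₂ ω)) := by
    funext ω; simp [hF, Function.comp, hξ₁₂ ω, hξ₂₁ ω]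
  -- rectangle computation
  have hmushift : ∀ (s : Set ℝ), MeasurableSet s → ∀ c : ℝ,
      μ ((fun x => deriv u₁₂ (x + c)) ⁻¹' s) = ν₁ s := by
    intro s hs c
    have hSm : MeasurableSet (deriv u₁₂ ⁻¹' s) := hd₁c.measurable hs
    have hper : ∀ x : ℝ, x + 2 * π ∈ deriv u₁₂ ⁻¹' s ↔ x ∈ deriv u₁₂ ⁻¹' s := by
      intro x; simp [Set.mem_preimage, hdp₁ x]
    have he : (fun x => deriv u₁₂ (x + c)) ⁻¹' s = (fun x => x + c) ⁻¹' (deriv u₁₂ ⁻¹' s) := rfl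
    rw [hν₁, Measure.map_apply hd₁c.measurable hs, he, hμ, Measure.smul_apply,
      Measure.smul_apply, mu_shift hSm hper c]
  have hrect : ∀ s t : Set ℝ, MeasurableSet s → MeasurableSet t →
      (Measure.map F (μ.prod μ)) (s ×ˢ t) = ν₁ s * ν₂ t := by
    intro s t hs ht
    rw [Measure.map_apply hFc.measurable (hs.prod ht),
      Measure.prod_apply_symm (hFc.measurable (hs.prod ht))]
    have hsec : ∀ y : ℝ, μ ((fun x => (x, y)) ⁻¹' (F ⁻¹' s ×ˢ t)) =
        ν₁ s * t.indicator (fun _ => (1:ℝ≥0∞)) (deriv u₂₁ y) := by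
      intro y
      by_cases hy : deriv u₂₁ y ∈ t
      · have he : (fun x => (x, y)) ⁻¹' (F ⁻¹' s ×ˢ t) =
            (fun x => deriv u₁₂ (x + δ * u₂₁ y)) ⁻¹' s := by
          ext x; simp [hF, Set.mem_prod, hy]
        rw [he, Set.indicator_of_mem hy, mul_one, hmushift s hs]
      · have he : (fun x => (x, y)) ⁻¹' (F ⁻¹' s ×ˢ t) = ∅ := by
          ext x; simp [hF, Set.mem_prod, hy]
        rw [he, Set.indicator_of_notMem hy, mul_zero, measure_empty]
    rw [lintegral_congr hsec, lintegral_const_mul' _ _ (measure_ne_top ν₁ s)]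
    congr 1
    have he2 : ∀ y : ℝ, t.indicator (fun _ => (1:ℝ≥0∞)) (deriv u₂₁ y) =
        (deriv u₂₁ ⁻¹' t).indicator (1 : ℝ → ℝ≥0∞) y := by
      intro y
      by_cases hy : deriv u₂₁ y ∈ t
      · rw [Set.indicator_of_mem hy,
          Set.indicator_of_mem (show y ∈ deriv u₂₁ ⁻¹' t from hy)]
        rfl
      · rw [Set.indicator_of_notMem hy,
          Set.indicator_of_notMem (show y ∉ deriv u₂₁ ⁻¹' t from hy)]
    rw [lintegral_congr he2, lintegral_indicator_one (hd₂c.measurable ht),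
      hν₂, Measure.map_apply hd₂c.measurable ht]
  have hmξ₁ : Measurable ξ₁₂ := by
    have : ξ₁₂ = fun ω => deriv u₁₂ (η₁ ω + δ * u₂₁ (η₂ ω)) := funext hξ₁₂
    rw [this]
    exact hd₁c.measurable.comp (hm₁.add
      (measurable_const.mul (h₂.continuous.measurable.comp hm₂)))
  have hmξ₂ : Measurable ξ₂₁ := by
    have : ξ₂₁ = fun ω => deriv u₂₁ (η₂ ω) := funext hξ₂₁
    rw [this]
    exact hd₂c.measurable.comp hm₂
  have hkey : Measure.map (fun ω => (ξ₁₂ ω, ξ₂₁ ω)) ℙ = ν₁.prod ν₂ := by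
    rw [hξpair, ← Measure.map_map hFc.measurable (hm₁.prodMk hm₂), hpairη]
    exact (Measure.prod_eq hrect).symm
  have hindξ : IndepFun ξ₁₂ ξ₂₁ := by
    rw [indepFun_iff_map_prod_eq_prod_map_map hmξ₁.aemeasurable hmξ₂.aemeasurable, hkey]
    have hfst : Measure.map ξ₁₂ ℙ = ν₁ := by
      have he : ξ₁₂ = Prod.fst ∘ (fun ω => (ξ₁₂ ω, ξ₂₁ ω)) := rfl
      rw [he, ← Measure.map_map measurable_fst (hmξ₁.prodMk hmξ₂), hkey,
        Measure.map_fst_prod]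
      simp
    have hsnd : Measure.map ξ₂₁ ℙ = ν₂ := by
      have he : ξ₂₁ = Prod.snd ∘ (fun ω => (ξ₁₂ ω, ξ₂₁ ω)) := rfl
      rw [he, ← Measure.map_map measurable_snd (hmξ₁.prodMk hmξ₂), hkey,
        Measure.map_snd_prod]
      simp
    rw [hfst, hsnd]
  refine ⟨fun s₁ s₂ => ?_, hindξ⟩
  -- characteristic function computation
  have hμint : ∀ (s : ℝ) (d : ℝ → ℝ), Continuous d →
      ∫ θ, Complex.exp (Complex.I * ((s * d θ : ℝ) : ℂ)) ∂μ =
        (1 / (2 * π) : ℂ) * ∫ θ in (-π)..π, Complex.exp (Complex.I * ((s * d θ : ℝ) : ℂ)) := by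
    intro s d hd
    rw [hμ, integral_smul_measure]
    rw [intervalIntegral.integral_of_le (by linarith [pi_pos] : -π ≤ π)]
    rw [show volume.restrict (Set.Ioo (-π) π) = volume.restrict (Set.Ioc (-π) π) from
      Measure.restrict_congr_set Ioo_ae_eq_Ioc]
    rw [ENNReal.toReal_inv, ENNReal.toReal_ofReal hπ.le]
    rw [Complex.real_smul]
    push_cast
    ring
  calc ∫ ω, Complex.exp (Complex.I * ((s₁ * ξ₁₂ ω + s₂ * ξ₂₁ ω : ℝ) : ℂ)) ∂ℙ
      = ∫ p : ℝ × ℝ, Complex.exp (Complex.I * ((s₁ * p.1 + s₂ * p.2 : ℝ) : ℂ))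
          ∂(Measure.map (fun ω => (ξ₁₂ ω, ξ₂₁ ω)) ℙ) := by
        rw [integral_map (hmξ₁.prodMk hmξ₂).aemeasurable]
        exact Continuous.aestronglyMeasurable (by fun_prop)
    _ = ∫ p : ℝ × ℝ, Complex.exp (Complex.I * ((s₁ * p.1 : ℝ) : ℂ)) *
          Complex.exp (Complex.I * ((s₂ * p.2 : ℝ) : ℂ)) ∂(ν₁.prod ν₂) := by
        rw [hkey]
        congr 1
        funext p
        rw [← Complex.exp_add]
        congr 1
        push_cast
        ring
    _ = (∫ x, Complex.exp (Complex.I * ((s₁ * x : ℝ) : ℂ)) ∂ν₁) *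
          (∫ y, Complex.exp (Complex.I * ((s₂ * y : ℝ) : ℂ)) ∂ν₂) :=
        integral_prod_mul (μ := ν₁) (ν := ν₂)
          (fun x => Complex.exp (Complex.I * ((s₁ * x : ℝ) : ℂ)))
          (fun y => Complex.exp (Complex.I * ((s₂ * y : ℝ) : ℂ)))
    _ = ((1 / (2 * π) : ℂ) * ∫ θ in (-π)..π, Complex.exp (Complex.I * ((s₁ * deriv u₁₂ θ : ℝ) : ℂ))) *
        ((1 / (2 * π) : ℂ) * ∫ θ in (-π)..π, Complex.exp (Complex.I * ((s₂ * deriv u₂₁ θ : ℝ) : ℂ))) := by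
        rw [hν₁, hν₂, integral_map hd₁c.measurable.aemeasurable
            (Continuous.aestronglyMeasurable (by fun_prop)),
          integral_map hd₂c.measurable.aemeasurable
            (Continuous.aestronglyMeasurable (by fun_prop)),
          hμint s₁ (deriv u₁₂) hd₁c, hμint s₂ (deriv u₂₁) hd₂c]
end

section
/- For d = 2 and ℓ = 4, the operator D v := (1 − k² sin²(2θ)) v'' + (ℓ−1) k² sin(4θ) v' − k² ℓ (2 sin²(2θ) + ℓ cos²(2θ)) v preserves the two-dimensional space spanned by {1, cos(4θ)}: D applied to v(θ) = a + b cos 4θ again has the form a' + b' cos 4θ, where (a', b') is a linear function of (a, b) given by the matrix with entries determined by the recurrence with coefficients a_j, b_j, c_j of the paper; in particular the eigenvalues μ of D on this space satisfy μ² + 16(1+k²)μ + 192k² = 0. -/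
open Real Polynomial

/-- The operator `D v = (1 − k² sin²2θ) v'' + 3k² sin 4θ v' − 4k²(2 sin²2θ + 4 cos²2θ) v`
arising for `d = 2`, `ℓ = 4`. -/
noncomputable def Dop (k : ℝ) (v : ℝ → ℝ) (θ : ℝ) : ℝ :=
  (1 - k ^ 2 * Real.sin (2 * θ) ^ 2) * deriv (deriv v) θ
    + 3 * k ^ 2 * Real.sin (4 * θ) * deriv v θ
    - 4 * k ^ 2 * (2 * Real.sin (2 * θ) ^ 2 + 4 * Real.cos (2 * θ) ^ 2) * v θ

lemma deriv1 (a b : ℝ) :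
    deriv (fun t => a + b * Real.cos (4 * t)) = fun t => b * (-4 * Real.sin (4 * t)) := by
  funext t
  have h : HasDerivAt (fun t : ℝ => a + b * Real.cos (4 * t)) (b * (-4 * Real.sin (4 * t))) t := by
    have := ((Real.hasDerivAt_cos (4 * t)).comp t ((hasDerivAt_id t).const_mul 4)).const_mul b
    simpa [mul_comm, mul_assoc, mul_left_comm] using (this.const_add a)
  exact h.deriv

lemma deriv2 (b : ℝ) :
    deriv (fun t => b * (-4 * Real.sin (4 * t))) = fun t => b * (-16 * Real.cos (4 * t)) := by
  funext t
  have h : HasDerivAt (fun t : ℝ => b * (-4 * Real.sin (4 * t))) (b * (-16 * Real.cos (4 * t))) t := by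
    have := (((Real.hasDerivAt_sin (4 * t)).comp t ((hasDerivAt_id t).const_mul 4)).const_mul (-4)).const_mul b
    exact this.congr_deriv (by ring)
  exact h.deriv

/-- For `d = 2`, `ℓ = 4`, the operator `D` preserves `span{1, cos 4θ}`, and the
characteristic polynomial of the induced `2×2` matrix is `μ² + 16(1+k²)μ + 192k²`. -/
theorem Dop_invariant_charpoly (k : ℝ) :
    ∃ M : Matrix (Fin 2) (Fin 2) ℝ,
      (∀ a b θ : ℝ,
        Dop k (fun t => a + b * Real.cos (4 * t)) θ =
          (M 0 0 * a + M 0 1 * b) + (M 1 0 * a + M 1 1 * b) * Real.cos (4 * θ)) ∧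
      M.charpoly = X ^ 2 + C (16 * (1 + k ^ 2)) * X + C (192 * k ^ 2) := by
  refine ⟨!![-12 * k ^ 2, -12 * k ^ 2; -4 * k ^ 2, -16 - 4 * k ^ 2], ?_, ?_⟩
  · intro a b θ
    unfold Dop
    rw [deriv1, deriv2]
    have h4 : (4 : ℝ) * θ = 2 * (2 * θ) := by ring
    have hs : Real.sin (4 * θ) = 2 * Real.sin (2 * θ) * Real.cos (2 * θ) := by
      rw [h4, Real.sin_two_mul]
    have hc : Real.cos (4 * θ) = 1 - 2 * Real.sin (2 * θ) ^ 2 := by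
      rw [h4, Real.cos_two_mul']
      linarith [Real.sin_sq_add_cos_sq (2 * θ)]
    have hp : Real.sin (2 * θ) ^ 2 + Real.cos (2 * θ) ^ 2 = 1 := Real.sin_sq_add_cos_sq _
    simp only [Matrix.of_apply, Matrix.cons_val', Matrix.cons_val_zero, Matrix.cons_val_one, Matrix.head_cons,
      Matrix.empty_val', Matrix.cons_val_fin_one, Matrix.head_fin_const]
    rw [hs, hc]
    linear_combination (-16 * k ^ 2 * (b * Real.sin (2 * θ) ^ 2 + a + b)) * hp
  · rw [Matrix.charpoly, Matrix.det_fin_two]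
    simp only [Matrix.charmatrix_apply_eq, Matrix.charmatrix_apply_ne, zero_ne_one, one_ne_zero, ne_eq, not_false_eq_true, Matrix.of_apply, Matrix.cons_val',
      Matrix.cons_val_zero, Matrix.cons_val_one, Matrix.head_cons, Matrix.empty_val',
      Matrix.cons_val_fin_one, Matrix.head_fin_const, map_mul, map_add, map_sub, map_neg,
      map_pow, map_ofNat, map_one]
    ring
end
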